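/- Let F₁ ⊆ F₂ ⊆ ℤ be infinite sets, where F₁ = ⨆_i φ_i(F₁) is a disjoint union under affine maps φ_i(x) = a_i·x + b_i with |a_i| > 1, and F₂ = ⨆_j ψ_j(F₂) is a disjoint union under affine maps ψ_j(x) = c_j·x + d_j with |c_j| > 1. If α, β are the unique reals with ∑_i |a_i|^{-α} = 1 and ∑_j |c_j|^{-β} = 1, then α ≤ β. -/

import Mathlib

/-!
Let `N_F(t)` count the points `y ∈ F` with `|y| ≤ t`. If `|b| ≤ (|a| - 1) K`, the map
`x ↦ a x + b` satisfies `|a x + b| + K ≤ |a| (|x| + K)` and `|a| (|x| - K) ≤ |a x + b| - K`.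
Hence, after shifting `t` by `K`, a disjoint self-similar set satisfies
`∑ N(t / |aᵢ|) ≤ N(t)` and a self-similar cover satisfies `N(t) ≤ ∑ N(t / |cⱼ|)`.
Inducting along the contractions `t ↦ t / |aᵢ|`, these recursions give
`ε t ^ α ≤ N_{F₁}(t)` and `N_{F₂}(t) ≤ C t ^ β` for large `t`, and `N_{F₁} ≤ N_{F₂}`
forces `α ≤ β`.
-/

open Filter Set
open scoped Function

section Growth

variable {ι : Type*} [Fintype ι] {s : ι → ℝ}

lemma nonneg_of_sum_rpow_neg_eq_one {γ : ℝ} (hs : ∀ i, 1 < s i)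
    (h : ∑ i, s i ^ (-γ) = 1) : 0 ≤ γ := by
  by_contra! hγ
  obtain ⟨i⟩ : Nonempty ι := by
    by_contra! hι
    simp at h
  have hi : 1 < s i ^ (-γ) := Real.one_lt_rpow (hs i) (neg_pos.2 hγ)
  have : s i ^ (-γ) ≤ ∑ j, s j ^ (-γ) :=
    Finset.single_le_sum (fun j _ => Real.rpow_nonneg (zero_le_one.trans (hs j).le) _)
      (Finset.mem_univ i)
  linarith

lemma sum_mul_div_rpow_eq {γ c t : ℝ} (hs : ∀ i, 0 ≤ s i) (ht : 0 ≤ t)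
    (h : ∑ i, s i ^ (-γ) = 1) : ∑ i, c * (t / s i) ^ γ = c * t ^ γ := by
  have hterm : ∀ i, c * (t / s i) ^ γ = c * t ^ γ * s i ^ (-γ) := fun i => by
    rw [Real.div_rpow ht (hs i), Real.rpow_neg (hs i), div_eq_mul_inv, mul_assoc]
  simp_rw [hterm, ← Finset.mul_sum, h, mul_one]

lemma forall_of_scaling_induction (hs : ∀ i, 1 < s i) {P : ℝ → Prop} {T : ℝ}
    (hT : 0 < T) (base : ∀ t ≤ T, P t) (step : ∀ t, T < t → (∀ i, P (t / s i)) → P t)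
    (t : ℝ) : P t := by
  obtain ⟨μ, hμ, hμs⟩ : ∃ μ, 1 < μ ∧ ∀ i, μ ≤ s i := by
    cases isEmpty_or_nonempty ι
    · exact ⟨2, one_lt_two, fun i => isEmptyElim i⟩
    · obtain ⟨i₀, hi₀⟩ := Finite.exists_min s
      exact ⟨s i₀, hs i₀, hi₀⟩
  have hμ₀ : 0 < μ := zero_lt_one.trans hμ
  have key : ∀ k : ℕ, ∀ t ≤ μ ^ k * T, P t := by
    intro k
    induction k with
    | zero => simpa using base
    | succ k ih =>
      intro t ht
      rcases le_or_gt t T with htT | htT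
      · exact base t htT
      refine step t htT fun i => ih _ ?_
      have ht₀ : 0 ≤ t := hT.le.trans htT.le
      calc t / s i ≤ t / μ := div_le_div_of_nonneg_left ht₀ hμ₀ (hμs i)
        _ ≤ μ ^ k * T := by
          rw [div_le_iff₀ hμ₀]
          exact ht.trans_eq (by ring)
  obtain ⟨k, hk⟩ := pow_unbounded_of_one_lt (t / T) hμ
  exact key k t ((div_lt_iff₀ hT).1 hk).le

lemma exists_mul_rpow_le_of_sum_le {α : ℝ} {f : ℝ → ℝ} (hs : ∀ i, 1 < s i)
    (hα : ∑ i, s i ^ (-α) = 1) (hrec : ∀ t, ∑ i, f (t / s i) ≤ f t)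
    (hpos : ∀ᶠ t in atTop, 1 ≤ f t) : ∃ ε > 0, ∀ᶠ t in atTop, ε * t ^ α ≤ f t := by
  have hα₀ := nonneg_of_sum_rpow_neg_eq_one hs hα
  obtain ⟨A, hA₁, hA⟩ : ∃ A, 1 ≤ A ∧ ∀ i, s i ≤ A := by
    obtain ⟨A, hA⟩ := Finite.exists_le s
    exact ⟨max A 1, le_max_right _ _, fun i => (hA i).trans (le_max_left _ _)⟩
  obtain ⟨t₀, ht₀⟩ := eventually_atTop.1 hpos
  set t₁ := max t₀ 1
  have ht₁ : 0 < t₁ := zero_lt_one.trans_le (le_max_right _ _)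
  set T := A * t₁
  have hT : 0 < T := mul_pos (zero_lt_one.trans_le hA₁) ht₁
  refine ⟨T ^ (-α), Real.rpow_pos_of_pos hT _, eventually_atTop.2 ⟨t₁, ?_⟩⟩
  refine forall_of_scaling_induction hs hT (fun t htT ht => ?_) (fun t htT ih ht => ?_)
  · calc T ^ (-α) * t ^ α ≤ T ^ (-α) * T ^ α := by gcongr; exact ht₁.le.trans ht
      _ = 1 := by rw [Real.rpow_neg hT.le, inv_mul_cancel₀ (Real.rpow_pos_of_pos hT _).ne']
      _ ≤ f t := ht₀ t ((le_max_left _ _).trans ht)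
  · have ht₀ : 0 ≤ t := hT.le.trans htT.le
    have hlow : ∀ i, t₁ ≤ t / s i := fun i => by
      rw [le_div_iff₀ (zero_lt_one.trans (hs i))]
      nlinarith [hA i]
    calc T ^ (-α) * t ^ α = ∑ i, T ^ (-α) * (t / s i) ^ α :=
          (sum_mul_div_rpow_eq (fun i => (zero_lt_one.trans (hs i)).le) ht₀ hα).symm
      _ ≤ ∑ i, f (t / s i) := Finset.sum_le_sum fun i _ => ih i (hlow i)
      _ ≤ f t := hrec t

lemma exists_le_mul_rpow_of_le_sum {β : ℝ} {g : ℝ → ℝ} (hs : ∀ i, 1 < s i)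
    (hβ : ∑ i, s i ^ (-β) = 1) (hg : Monotone g) (hrec : ∀ t, g t ≤ ∑ i, g (t / s i)) :
    ∃ C, ∀ᶠ t in atTop, g t ≤ C * t ^ β := by
  have hβ₀ := nonneg_of_sum_rpow_neg_eq_one hs hβ
  obtain ⟨A, hA₁, hA⟩ : ∃ A, 1 ≤ A ∧ ∀ i, s i ≤ A := by
    obtain ⟨A, hA⟩ := Finite.exists_le s
    exact ⟨max A 1, le_max_right _ _, fun i => (hA i).trans (le_max_left _ _)⟩
  set C := max (g A) 0
  refine ⟨C, eventually_atTop.2 ⟨1, ?_⟩⟩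
  refine forall_of_scaling_induction hs (zero_lt_one.trans_le hA₁)
    (fun t htA ht => ?_) (fun t htA ih ht => ?_)
  · calc g t ≤ C := (hg htA).trans (le_max_left _ _)
      _ ≤ C * t ^ β := le_mul_of_one_le_right (le_max_right _ _) (Real.one_le_rpow ht hβ₀)
  · have ht₀ : 0 ≤ t := zero_le_one.trans ht
    have hlow : ∀ i, 1 ≤ t / s i := fun i => by
      rw [le_div_iff₀ (zero_lt_one.trans (hs i)), one_mul]
      exact (hA i).trans htA.le
    calc g t ≤ ∑ i, g (t / s i) := hrec t
      _ ≤ ∑ i, C * (t / s i) ^ β := Finset.sum_le_sum fun i _ => ih i (hlow i)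
      _ = C * t ^ β := sum_mul_div_rpow_eq (fun i => (zero_lt_one.trans (hs i)).le) ht₀ hβ

end Growth

lemma le_of_eventually_mul_rpow_le {α β ε C : ℝ} (hε : 0 < ε)
    (h : ∀ᶠ t in atTop, ε * t ^ α ≤ C * t ^ β) : α ≤ β := by
  by_contra! hβα
  have hlarge : ∀ᶠ t in atTop, C / ε < t ^ (α - β) :=
    (tendsto_rpow_atTop (sub_pos.2 hβα)).eventually_gt_atTop _
  obtain ⟨t, ht, hCt, htpos⟩ := (h.and (hlarge.and (eventually_gt_atTop 0))).exists
  have hpow : t ^ α = t ^ (α - β) * t ^ β := by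
    rw [← Real.rpow_add htpos, sub_add_cancel]
  have : C * t ^ β < ε * t ^ α := by
    rw [hpow, ← mul_assoc]
    exact mul_lt_mul_of_pos_right ((div_lt_iff₀' hε).1 hCt) (Real.rpow_pos_of_pos htpos _)
  linarith

lemma abs_mul_add_add_le {a b x K : ℝ} (hK : |b| ≤ (|a| - 1) * K) :
    |a * x + b| + K ≤ |a| * (|x| + K) := by
  have := abs_add_le (a * x) b
  rw [abs_mul] at this
  linarith

lemma mul_abs_sub_le {a b x K : ℝ} (hK : |b| ≤ (|a| - 1) * K) :
    |a| * (|x| - K) ≤ |a * x + b| - K := by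
  have := abs_sub_abs_le_abs_sub (a * x) (-b)
  rw [abs_mul, abs_neg, sub_neg_eq_add] at this
  linarith

noncomputable def ballCount (F : Set ℤ) (r : ℝ) : ℕ := {y ∈ F | |(y : ℝ)| ≤ r}.ncard

lemma finite_setOf_abs_le (r : ℝ) : {y : ℤ | |(y : ℝ)| ≤ r}.Finite := by
  refine (Set.finite_Icc (-⌊r⌋) ⌊r⌋).subset fun y hy => abs_le.1 (Int.le_floor.2 ?_)
  simpa using hy

lemma finite_sep_abs_le (F : Set ℤ) (r : ℝ) : {y ∈ F | |(y : ℝ)| ≤ r}.Finite :=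
  (finite_setOf_abs_le r).subset fun _ hy => hy.2

lemma ballCount_mono {F G : Set ℤ} {r r' : ℝ} (hFG : F ⊆ G) (hr : r ≤ r') :
    ballCount F r ≤ ballCount G r' :=
  Set.ncard_le_ncard (fun _ hy => ⟨hFG hy.1, hy.2.trans hr⟩) (finite_sep_abs_le G r')

section Recursion

variable {ι : Type*} [Fintype ι] (F : Set ℤ) {K : ℝ}

lemma sum_ballCount_div_le (a b : ι → ℤ) (ha : ∀ i, a i ≠ 0)
    (hK : ∀ i, |(b i : ℝ)| ≤ (|(a i : ℝ)| - 1) * K)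
    (hmaps : ∀ i, MapsTo (fun x => a i * x + b i) F F)
    (hdisj : Pairwise (Disjoint on (fun i => (fun x => a i * x + b i) '' F))) (t : ℝ) :
    ∑ i, ballCount F (t / |(a i : ℝ)| - K) ≤ ballCount F (t - K) := by
  set S : ι → Set ℤ := fun i =>
    (fun x => a i * x + b i) '' {x ∈ F | |(x : ℝ)| ≤ t / |(a i : ℝ)| - K}
  have hinj : ∀ i, Function.Injective (fun x => a i * x + b i) := fun i x y hxy =>
    mul_left_cancel₀ (ha i) (add_right_cancel hxy)
  have hS : ∀ i, (S i).ncard = ballCount F (t / |(a i : ℝ)| - K) := fun i =>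
    Set.ncard_image_of_injective _ (hinj i)
  have hSdisj : Pairwise (Disjoint on S) := fun i j hij =>
    (hdisj hij).mono (image_mono fun _ hx => hx.1) (image_mono fun _ hx => hx.1)
  have hSsub : (⋃ i, S i) ⊆ {y ∈ F | |(y : ℝ)| ≤ t - K} := by
    rintro _ ⟨_, ⟨i, rfl⟩, x, ⟨hxF, hx⟩, rfl⟩
    have hai : 0 < |(a i : ℝ)| := abs_pos.2 (Int.cast_ne_zero.2 (ha i))
    refine ⟨hmaps i hxF, ?_⟩
    have := abs_mul_add_add_le (x := (x : ℝ)) (hK i)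
    have := (le_div_iff₀' hai).1 (le_sub_iff_add_le.1 hx)
    push_cast
    linarith
  calc ∑ i, ballCount F (t / |(a i : ℝ)| - K) = (⋃ i, S i).ncard := by
        rw [ncard_iUnion_of_finite (fun i => (finite_sep_abs_le F _).image _) hSdisj,
          finsum_eq_sum_of_fintype]
        exact Finset.sum_congr rfl fun i _ => (hS i).symm
    _ ≤ ballCount F (t - K) := Set.ncard_le_ncard hSsub (finite_sep_abs_le F _)

lemma ballCount_le_sum_ballCount_div (c d : ι → ℤ) (hc : ∀ i, c i ≠ 0)
    (hK : ∀ i, |(d i : ℝ)| ≤ (|(c i : ℝ)| - 1) * K)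
    (hcover : F ⊆ ⋃ i, (fun x => c i * x + d i) '' F) (t : ℝ) :
    ballCount F (t + K) ≤ ∑ i, ballCount F (t / |(c i : ℝ)| + K) := by
  have hsub : {y ∈ F | |(y : ℝ)| ≤ t + K} ⊆
      ⋃ i, (fun x => c i * x + d i) '' {x ∈ F | |(x : ℝ)| ≤ t / |(c i : ℝ)| + K} := by
    rintro y ⟨hyF, hy⟩
    obtain ⟨_, ⟨i, rfl⟩, x, hxF, rfl⟩ := hcover hyF
    have hci : 0 < |(c i : ℝ)| := abs_pos.2 (Int.cast_ne_zero.2 (hc i))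
    refine mem_iUnion.2 ⟨i, x, ⟨hxF, ?_⟩, rfl⟩
    have := mul_abs_sub_le (x := (x : ℝ)) (hK i)
    push_cast at hy
    have : |(x : ℝ)| - K ≤ t / |(c i : ℝ)| := (le_div_iff₀' hci).2 (by linarith)
    linarith
  calc ballCount F (t + K) ≤ _ := Set.ncard_le_ncard hsub
        (finite_iUnion fun i => (finite_sep_abs_le F _).image _)
    _ ≤ _ := ncard_iUnion_le_of_fintype _
    _ ≤ _ := Finset.sum_le_sum fun i _ => Set.ncard_image_le (finite_sep_abs_le F _)

end Recursion

section SelfSimilar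

variable {ι : Type*} [Fintype ι] {F : Set ℤ}

lemma exists_abs_le_sub_one_mul (a b : ι → ℤ) (ha : ∀ i, 1 < |a i|) :
    ∃ K ≥ 0, ∀ i, |(b i : ℝ)| ≤ (|(a i : ℝ)| - 1) * K := by
  refine ⟨∑ j, |(b j : ℝ)|, Finset.sum_nonneg fun j _ => abs_nonneg _, fun i => ?_⟩
  have ha₂ : (2 : ℝ) ≤ |(a i : ℝ)| := by exact_mod_cast (ha i : (2 : ℤ) ≤ |a i|)
  calc |(b i : ℝ)| ≤ ∑ j, |(b j : ℝ)| :=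
        Finset.single_le_sum (f := fun j => |(b j : ℝ)|) (fun j _ => abs_nonneg _)
          (Finset.mem_univ i)
    _ ≤ (|(a i : ℝ)| - 1) * ∑ j, |(b j : ℝ)| :=
        le_mul_of_one_le_left (Finset.sum_nonneg fun j _ => abs_nonneg _) (by linarith)

lemma exists_mul_rpow_le_ballCount (a b : ι → ℤ) (ha : ∀ i, 1 < |a i|)
    (hmaps : ∀ i, MapsTo (fun x => a i * x + b i) F F)
    (hdisj : Pairwise (Disjoint on (fun i => (fun x => a i * x + b i) '' F)))
    (hne : F.Nonempty) {α : ℝ} (hα : ∑ i, |(a i : ℝ)| ^ (-α) = 1) :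
    ∃ ε > 0, ∀ᶠ t in atTop, ε * t ^ α ≤ ballCount F t := by
  obtain ⟨K, hK₀, hK⟩ := exists_abs_le_sub_one_mul a b ha
  obtain ⟨x₀, hx₀⟩ := hne
  have hpos : ∀ᶠ t in atTop, (1 : ℝ) ≤ ballCount F (t - K) := by
    filter_upwards [eventually_ge_atTop (|(x₀ : ℝ)| + K)] with t ht
    exact Nat.one_le_cast.2
      ((Set.ncard_pos (finite_sep_abs_le F _)).2 ⟨x₀, hx₀, by linarith⟩)
  obtain ⟨ε, hε, hgrowth⟩ := exists_mul_rpow_le_of_sum_le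
    (f := fun t => (ballCount F (t - K) : ℝ)) (fun i => by exact_mod_cast ha i) hα
    (fun t => by
      exact_mod_cast sum_ballCount_div_le F a b
        (fun i => abs_pos.1 (zero_lt_one.trans (ha i))) hK hmaps hdisj t)
    hpos
  refine ⟨ε, hε, hgrowth.mono fun t ht => ht.trans ?_⟩
  exact_mod_cast ballCount_mono subset_rfl (by linarith)

lemma exists_ballCount_le_mul_rpow (c d : ι → ℤ) (hc : ∀ i, 1 < |c i|)
    (hcover : F ⊆ ⋃ i, (fun x => c i * x + d i) '' F) {β : ℝ}
    (hβ : ∑ i, |(c i : ℝ)| ^ (-β) = 1) :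
    ∃ C, ∀ᶠ t in atTop, (ballCount F t : ℝ) ≤ C * t ^ β := by
  obtain ⟨K, hK₀, hK⟩ := exists_abs_le_sub_one_mul c d hc
  obtain ⟨C, hgrowth⟩ := exists_le_mul_rpow_of_le_sum
    (g := fun t => (ballCount F (t + K) : ℝ)) (fun i => by exact_mod_cast hc i) hβ
    (fun t t' htt' => Nat.cast_le.2 (ballCount_mono subset_rfl (by linarith)))
    (fun t => by
      exact_mod_cast ballCount_le_sum_ballCount_div F c d
        (fun i => abs_pos.1 (zero_lt_one.trans (hc i))) hK hcover t)
  refine ⟨C, hgrowth.mono fun t ht => le_trans ?_ ht⟩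
  exact_mod_cast ballCount_mono subset_rfl (by linarith)

end SelfSimilar

theorem fractal_dimension_monotone_general
    (n m : ℕ) (a b : Fin n → ℤ) (c d : Fin m → ℤ) (F₁ F₂ : Set ℤ)
    (hF₁_inf : F₁.Infinite)
    (hsub : F₁ ⊆ F₂)
    (ha : ∀ i, 1 < |a i|) (hc : ∀ j, 1 < |c j|)
    (hunion₁ : F₁ = ⋃ i, (fun x => a i * x + b i) '' F₁)
    (hdisj₁ : ∀ i j, i ≠ j →
      Disjoint ((fun x => a i * x + b i) '' F₁) ((fun x => a j * x + b j) '' F₁))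
    (hunion₂ : F₂ = ⋃ j, (fun x => c j * x + d j) '' F₂)
    (α β : ℝ)
    (hα : ∑ i : Fin n, (|(a i : ℝ)|) ^ (-α) = 1)
    (hβ : ∑ j : Fin m, (|(c j : ℝ)|) ^ (-β) = 1) :
    α ≤ β := by
  have hmaps₁ : ∀ i, MapsTo (fun x => a i * x + b i) F₁ F₁ := fun i x hx => by
    rw [hunion₁]
    exact mem_iUnion.2 ⟨i, x, hx, rfl⟩
  obtain ⟨ε, hε, hlower⟩ :=
    exists_mul_rpow_le_ballCount a b ha hmaps₁ hdisj₁ hF₁_inf.nonempty hα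
  obtain ⟨C, hupper⟩ := exists_ballCount_le_mul_rpow c d hc hunion₂.subset hβ
  refine le_of_eventually_mul_rpow_le (C := C) hε ?_
  filter_upwards [hlower, hupper] with t hlo hup
  calc ε * t ^ α ≤ ballCount F₁ t := hlo
    _ ≤ ballCount F₂ t := by exact_mod_cast ballCount_mono hsub le_rfl
    _ ≤ C * t ^ β := hup

/-- Monotonicity of fractal dimension under inclusion: if `F₁ ⊆ F₂` are
fractals in `ℤ` with dimensions `α`, `β` respectively, then `α ≤ β`. -/
theorem fractal_dimension_monotone
    (n m : ℕ) (a b : Fin n → ℤ) (c d : Fin m → ℤ) (F₁ F₂ : Set ℤ)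
    (hF₁_inf : F₁.Infinite) (hF₂_inf : F₂.Infinite)
    (hsub : F₁ ⊆ F₂)
    (ha : ∀ i, 1 < |a i|) (hc : ∀ j, 1 < |c j|)
    (hunion₁ : F₁ = ⋃ i, (fun x => a i * x + b i) '' F₁)
    (hdisj₁ : ∀ i j, i ≠ j →
      Disjoint ((fun x => a i * x + b i) '' F₁) ((fun x => a j * x + b j) '' F₁))
    (hunion₂ : F₂ = ⋃ j, (fun x => c j * x + d j) '' F₂)
    (hdisj₂ : ∀ i j, i ≠ j →
      Disjoint ((fun x => c i * x + d i) '' F₂) ((fun x => c j * x + d j) '' F₂))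
    (α β : ℝ)
    (hα : ∑ i : Fin n, (|(a i : ℝ)|) ^ (-α) = 1)
    (hβ : ∑ j : Fin m, (|(c j : ℝ)|) ^ (-β) = 1) :
    α ≤ β :=
  fractal_dimension_monotone_general n m a b c d F₁ F₂ hF₁_inf hsub ha hc hunion₁ hdisj₁ hunion₂ α β
    hα hβ
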